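/- Let z = Δ^p z_1⋯z_ℓ be a rigid 3-strand braid in left normal form with ℓ ≥ 1. Then conjugation by ∂(z_ℓ) satisfies ∂(z_ℓ)^{−1} z ∂(z_ℓ) = Δ^p τ^{p+1}(z_ℓ) τ(z_1)⋯τ(z_{ℓ−1}) = c^{ℓ−1}(τ^{p+1}(z)), where c denotes cycling. -/

import Mathlib

/-!
Garside-theoretic definitions for the Artin braid group `B n`,
presented with generators `σ_1, …, σ_{n-1}` (indexed by `Fin (n-1)`).
-/

namespace Braid

/-- The braid relations on `m` generators: `σᵢσⱼ = σⱼσᵢ` for `|i - j| ≥ 2` and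
`σᵢσⱼσᵢ = σⱼσᵢσⱼ` for `j = i + 1`. -/
def braidRels (m : ℕ) : Set (FreeGroup (Fin m)) :=
  {r | ∃ i j : Fin m, ((i : ℕ) + 2 ≤ (j : ℕ) ∨ (j : ℕ) + 2 ≤ (i : ℕ)) ∧
      r = FreeGroup.of i * FreeGroup.of j * (FreeGroup.of j * FreeGroup.of i)⁻¹} ∪
  {r | ∃ i j : Fin m, (j : ℕ) = (i : ℕ) + 1 ∧
      r = FreeGroup.of i * FreeGroup.of j * FreeGroup.of i *
          (FreeGroup.of j * FreeGroup.of i * FreeGroup.of j)⁻¹}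

/-- The braid group on `n` strands. -/
abbrev B (n : ℕ) : Type := PresentedGroup (braidRels (n - 1))

/-- The Artin generator `σ_{i+1}` (0-indexed) of `B n`. -/
def gen (n : ℕ) (i : Fin (n - 1)) : B n := PresentedGroup.of i

/-- The Artin generator, as a function of a natural number index (junk value `1`
out of range). -/
def gen' (n : ℕ) (i : ℕ) : B n := if h : i < n - 1 then gen n ⟨i, h⟩ else 1

/-- The submonoid of positive braids `B_n⁺`. -/
def posMon (n : ℕ) : Submonoid (B n) := Submonoid.closure (Set.range (gen n))

/-- The prefix order: `a ≼ b` iff `a⁻¹ * b` is a positive braid. -/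
def Pref (n : ℕ) (a b : B n) : Prop := a⁻¹ * b ∈ posMon n

/-- The Garside half-twist `Δ = (σ_1 ⋯ σ_{n-1})(σ_1 ⋯ σ_{n-2}) ⋯ (σ_1 σ_2) σ_1`. -/
def Δb (n : ℕ) : B n :=
  (((List.range (n - 1)).reverse).map
    (fun k => ((List.range (k + 1)).map (gen' n)).prod)).prod

/-- The power `τ^k` of the inner automorphism `τ(x) = Δ⁻¹ x Δ`. -/
def τpow (n : ℕ) (k : ℤ) (x : B n) : B n := (Δb n) ^ (-k) * x * (Δb n) ^ k

/-- A braid is simple if `1 ≼ s ≼ Δ`. -/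
def IsSimple (n : ℕ) (s : B n) : Prop := Pref n 1 s ∧ Pref n s (Δb n)

/-- The right complement `∂(s) = s⁻¹ Δ` of a simple element. -/
def dcompl (n : ℕ) (s : B n) : B n := s⁻¹ * Δb n

/-- A pair `(a, b)` is left-weighted if `b ∧ ∂(a) = 1`, i.e. the only common
positive prefix of `b` and `∂(a)` is trivial. -/
def LeftWeighted (n : ℕ) (a b : B n) : Prop :=
  ∀ t : B n, Pref n 1 t → Pref n t b → Pref n t (dcompl n a) → t = 1

/-- `IsLNF n x p L` : the expression `Δ^p * L.prod` is the left normal form of `x`,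
i.e. each factor is simple, nontrivial, different from `Δ`, and each pair of
consecutive factors is left-weighted. -/
def IsLNF (n : ℕ) (x : B n) (p : ℤ) (L : List (B n)) : Prop :=
  x = (Δb n) ^ p * L.prod ∧
  (∀ s ∈ L, IsSimple n s ∧ s ≠ 1 ∧ s ≠ Δb n) ∧
  (∀ i : ℕ, i + 1 < L.length →
    LeftWeighted n (L.getD i 1) (L.getD (i + 1) 1))

/-- The canonical length `ℓ(x)`: the number of non-`Δ` factors in the left normal
form of `x`. -/
noncomputable def canLen (n : ℕ) (x : B n) : ℕ :=
  sInf {r : ℕ | ∃ p L, List.length L = r ∧ IsLNF n x p L}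

/-- The infimum `inf(x)`: the power of `Δ` in the left normal form of `x`. -/
noncomputable def infB (n : ℕ) (x : B n) : ℤ :=
  sSup {p : ℤ | ∃ L, IsLNF n x p L}

/-- The summit canonical length `ℓ_s(x)`: the minimal canonical length in the
conjugacy class of `x`. -/
noncomputable def summitLen (n : ℕ) (x : B n) : ℕ :=
  sInf {r : ℕ | ∃ z, IsConj x z ∧ canLen n z = r}

/-- The super summit set `SSS(x)`: conjugates of `x` of minimal canonical length. -/
def SSS (n : ℕ) (x : B n) : Set (B n) :=
  {y | IsConj x y ∧ canLen n y = summitLen n x}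

/-- A braid `x = Δ^p x_1 ⋯ x_r` (in left normal form, `r ≥ 1`) is rigid if the
pair `(x_r, τ^{-p}(x_1))` is left-weighted. -/
def Rigid (n : ℕ) (x : B n) : Prop :=
  ∃ p L, IsLNF n x p L ∧ L ≠ [] ∧
    LeftWeighted n (L.getLastD 1) (τpow n (-p) (L.headD 1))

/-- Cycling: for `x = Δ^p x_1 ⋯ x_r` in left normal form with `r ≥ 1`,
`c(x) = τ^{-p}(x_1)⁻¹ * x * τ^{-p}(x_1)` (and `c(x) = x` if `ℓ(x) = 0`). -/
noncomputable def cyc (n : ℕ) (x : B n) : B n :=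
  open Classical in
  if h : ∃ pL : ℤ × List (B n), IsLNF n x pL.1 pL.2 ∧ pL.2 ≠ [] then
    (τpow n (-(Classical.choose h).1) ((Classical.choose h).2.headD 1))⁻¹ * x *
      τpow n (-(Classical.choose h).1) ((Classical.choose h).2.headD 1)
  else x


-- basics
abbrev s1 : B 3 := gen 3 ⟨0, by norm_num⟩
abbrev s2 : B 3 := gen 3 ⟨1, by norm_num⟩

lemma mk_rel_one {α} {rels : Set (FreeGroup α)} {r} (h : r ∈ rels) :
    PresentedGroup.mk rels r = 1 := by
  have : r ∈ Subgroup.normalClosure rels := Subgroup.subset_normalClosure h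
  exact (QuotientGroup.eq_one_iff r).2 this

lemma braid_rel : s1 * s2 * s1 = s2 * s1 * s2 := by
  have h : (FreeGroup.of (0 : Fin 2) * FreeGroup.of (1 : Fin 2) * FreeGroup.of 0 *
      (FreeGroup.of 1 * FreeGroup.of 0 * FreeGroup.of 1)⁻¹) ∈ braidRels 2 :=
    Or.inr ⟨0, 1, rfl, rfl⟩
  have := mk_rel_one (rels := braidRels 2) h
  simp only [map_mul, map_inv] at this
  have h2 := mul_eq_one_iff_eq_inv.mp this
  rw [inv_inv] at h2
  exact h2

lemma delta_eq : Δb 3 = s1 * s2 * s1 := by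
  show (((List.range 2).reverse).map
    (fun k => ((List.range (k + 1)).map (gen' 3)).prod)).prod = _
  simp [List.range_succ, gen']
  rfl


-- CORE (to be appended after basics)
inductive S4 : Type | sa | sb | sab | sba
deriving DecidableEq, Repr

open S4

def τs : S4 → S4 | sa => sb | sb => sa | sab => sba | sba => sab

@[simp] lemma τs_τs (s : S4) : τs (τs s) = s := by cases s <;> rfl

/-- `nxt a b = true` iff the simple factor `b` may follow `a` in a left normal form. -/
def nxt : S4 → S4 → Bool
  | sa, sa => true | sa, sab => true
  | sb, sb => true | sb, sba => true
  | sab, sb => true | sab, sba => true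
  | sba, sa => true | sba, sab => true
  | _, _ => false

@[simp] lemma nxt_τs (a b : S4) : nxt (τs a) (τs b) = nxt a b := by cases a <;> cases b <;> rfl

/-- Normal form data: `(p, F)` represents `Δ^p * F.reverse.prod` (the list is stored
with the *last* factor first). -/
abbrev Dd : Type := ℤ × List S4

def ValidL (F : List S4) : Prop := List.Chain' (fun x y => nxt y x = true) F

lemma validL_map_τs {F : List S4} (h : ValidL F) : ValidL (F.map τs) := by
  unfold ValidL List.Chain' at *
  rw [List.isChain_map]
  exact h.imp (by intro a b hab; simpa using hab)

/-- multiplication by σ1 on the right -/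
def mulA : Dd → Dd
  | (p, []) => (p, [sa])
  | (p, sa :: t) => (p, sa :: sa :: t)
  | (p, sba :: t) => (p, sa :: sba :: t)
  | (p, sb :: t) => (p, sba :: t)
  | (p, sab :: t) => (p + 1, t.map τs)

/-- multiplication by σ2 on the right -/
def mulB : Dd → Dd
  | (p, []) => (p, [sb])
  | (p, sb :: t) => (p, sb :: sb :: t)
  | (p, sab :: t) => (p, sb :: sab :: t)
  | (p, sa :: t) => (p, sab :: t)
  | (p, sba :: t) => (p + 1, t.map τs)

def shiftU : Dd → Dd | (p, F) => (p + 1, F.map τs)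
def shiftD : Dd → Dd | (p, F) => (p - 1, F.map τs)

def invA : Dd → Dd := fun d => shiftD (mulA (mulB d))
def invB : Dd → Dd := fun d => shiftD (mulB (mulA d))

lemma validL_cons {a : S4} {t : List S4} (h : ValidL (a :: t)) : ValidL t := h.tail

lemma validL_mulA {p : ℤ} {F : List S4} (h : ValidL F) : ValidL (mulA (p, F)).2 := by
  rcases F with _ | ⟨a, t⟩
  · simp [mulA, ValidL, List.Chain']
  · cases a
    · exact List.IsChain.cons_cons rfl h
    · rcases t with _ | ⟨b, t'⟩
      · simp [mulA, ValidL, List.Chain']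
      · have hb : nxt b sb = true := (List.isChain_cons_cons.mp h).1
        have hba : nxt b sba = true := by cases b <;> simp_all [nxt]
        exact List.IsChain.cons_cons hba (validL_cons h)
    · exact validL_map_τs (validL_cons h)
    · exact List.IsChain.cons_cons rfl h

lemma validL_mulB {p : ℤ} {F : List S4} (h : ValidL F) : ValidL (mulB (p, F)).2 := by
  rcases F with _ | ⟨a, t⟩
  · simp [mulB, ValidL, List.Chain']
  · cases a
    · rcases t with _ | ⟨b, t'⟩
      · simp [mulB, ValidL, List.Chain']
      · have hb : nxt b sa = true := (List.isChain_cons_cons.mp h).1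
        have hba : nxt b sab = true := by cases b <;> simp_all [nxt]
        exact List.IsChain.cons_cons hba (validL_cons h)
    · exact List.IsChain.cons_cons rfl h
    · exact List.IsChain.cons_cons rfl h
    · exact validL_map_τs (validL_cons h)
@[simp] lemma comp_ττ : τs ∘ τs = id := funext τs_τs

lemma invA_mulA {d : Dd} (h : ValidL d.2) : invA (mulA d) = d := by
  obtain ⟨p, F⟩ := d
  rcases F with _ | ⟨a, t⟩
  · simp [invA, mulA, mulB, shiftD, τs]
  · rcases t with _ | ⟨b, t'⟩
    · cases a <;> simp [invA, mulA, mulB, shiftD, τs]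
    · have hb := (List.isChain_cons_cons.mp h).1
      cases a <;> cases b <;> simp_all [invA, mulA, mulB, shiftD, nxt, τs]

lemma invB_mulB {d : Dd} (h : ValidL d.2) : invB (mulB d) = d := by
  obtain ⟨p, F⟩ := d
  rcases F with _ | ⟨a, t⟩
  · simp [invB, mulA, mulB, shiftD, τs]
  · rcases t with _ | ⟨b, t'⟩
    · cases a <;> simp [invB, mulA, mulB, shiftD, τs]
    · have hb := (List.isChain_cons_cons.mp h).1
      cases a <;> cases b <;> simp_all [invB, mulA, mulB, shiftD, nxt, τs]

lemma mulA_invA {d : Dd} (h : ValidL d.2) : mulA (invA d) = d := by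
  obtain ⟨p, F⟩ := d
  rcases F with _ | ⟨a, t⟩
  · simp [invA, mulA, mulB, shiftD, τs]
  · rcases t with _ | ⟨b, t'⟩
    · cases a <;> simp [invA, mulA, mulB, shiftD, τs]
    · have hb := (List.isChain_cons_cons.mp h).1
      cases a <;> cases b <;> simp_all [invA, mulA, mulB, shiftD, nxt, τs]

lemma mulB_invB {d : Dd} (h : ValidL d.2) : mulB (invB d) = d := by
  obtain ⟨p, F⟩ := d
  rcases F with _ | ⟨a, t⟩
  · simp [invB, mulA, mulB, shiftD, τs]
  · rcases t with _ | ⟨b, t'⟩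
    · cases a <;> simp [invB, mulA, mulB, shiftD, τs]
    · have hb := (List.isChain_cons_cons.mp h).1
      cases a <;> cases b <;> simp_all [invB, mulA, mulB, shiftD, nxt, τs]

lemma braid_step {d : Dd} (h : ValidL d.2) :
    mulA (mulB (mulA d)) = mulB (mulA (mulB d)) := by
  obtain ⟨p, F⟩ := d
  rcases F with _ | ⟨a, t⟩
  · simp [mulA, mulB]
  · rcases t with _ | ⟨b, t'⟩
    · cases a <;> simp [mulA, mulB, τs]
    · have hb := (List.isChain_cons_cons.mp h).1
      cases a <;> cases b <;> simp_all [mulA, mulB, nxt, τs]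

lemma delta_step {d : Dd} (h : ValidL d.2) :
    mulA (mulB (mulA d)) = shiftU d := by
  obtain ⟨p, F⟩ := d
  rcases F with _ | ⟨a, t⟩
  · simp [mulA, mulB, shiftU]
  · rcases t with _ | ⟨b, t'⟩
    · cases a <;> simp [mulA, mulB, shiftU, τs]
    · have hb := (List.isChain_cons_cons.mp h).1
      cases a <;> cases b <;> simp_all [mulA, mulB, shiftU, nxt, τs]

lemma mulA_fst_mono (d : Dd) : d.1 ≤ (mulA d).1 := by
  obtain ⟨p, F⟩ := d
  rcases F with _ | ⟨a, t⟩
  · exact le_refl _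
  · cases a <;> simp [mulA]

lemma mulB_fst_mono (d : Dd) : d.1 ≤ (mulB d).1 := by
  obtain ⟨p, F⟩ := d
  rcases F with _ | ⟨a, t⟩
  · exact le_refl _
  · cases a <;> simp [mulB]
/-! ### The action of `B 3` on valid normal form data -/

abbrev Vt : Type := {d : Dd // ValidL d.2}

lemma validL_mulA' {d : Dd} (h : ValidL d.2) : ValidL (mulA d).2 := by
  obtain ⟨p, F⟩ := d; exact validL_mulA h

lemma validL_mulB' {d : Dd} (h : ValidL d.2) : ValidL (mulB d).2 := by
  obtain ⟨p, F⟩ := d; exact validL_mulB h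

lemma validL_shiftD {d : Dd} (h : ValidL d.2) : ValidL (shiftD d).2 := by
  obtain ⟨p, F⟩ := d; exact validL_map_τs h

lemma validL_invA {d : Dd} (h : ValidL d.2) : ValidL (invA d).2 :=
  validL_shiftD (validL_mulA' (validL_mulB' h))

lemma validL_invB {d : Dd} (h : ValidL d.2) : ValidL (invB d).2 :=
  validL_shiftD (validL_mulB' (validL_mulA' h))

def eqA : Equiv.Perm Vt where
  toFun d := ⟨mulA d.1, validL_mulA' d.2⟩
  invFun d := ⟨invA d.1, validL_invA d.2⟩
  left_inv d := Subtype.ext (invA_mulA d.2)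
  right_inv d := Subtype.ext (mulA_invA d.2)

def eqB : Equiv.Perm Vt where
  toFun d := ⟨mulB d.1, validL_mulB' d.2⟩
  invFun d := ⟨invB d.1, validL_invB d.2⟩
  left_inv d := Subtype.ext (invB_mulB d.2)
  right_inv d := Subtype.ext (mulB_invB d.2)

lemma perm_braid : eqA * eqB * eqA = eqB * eqA * eqB := by
  apply Equiv.ext; intro d
  apply Subtype.ext
  show mulA (mulB (mulA d.val)) = mulB (mulA (mulB d.val))
  exact braid_step d.2

def genPerm : Fin 2 → (Equiv.Perm Vt)ᵐᵒᵖ :=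
  fun i => MulOpposite.op (if (i : ℕ) = 0 then eqA else eqB)

lemma genPerm_rels : ∀ r ∈ braidRels 2, FreeGroup.lift genPerm r = 1 := by
  rintro r (⟨i, j, hij, rfl⟩ | ⟨i, j, hij, rfl⟩)
  · exfalso; have := i.isLt; have := j.isLt; omega
  · have hi : (i : ℕ) = 0 := by have := j.isLt; omega
    have hj : (j : ℕ) = 1 := by omega
    have hgi : genPerm i = MulOpposite.op eqA := by simp [genPerm, hi]
    have hgj : genPerm j = MulOpposite.op eqB := by simp [genPerm, hj]
    simp only [map_mul, map_inv, FreeGroup.lift_apply_of, hgi, hgj]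
    rw [mul_inv_eq_one]
    have h2 : eqA * (eqB * eqA) = eqB * (eqA * eqB) := by
      rw [← mul_assoc, ← mul_assoc]; exact perm_braid
    calc MulOpposite.op eqA * MulOpposite.op eqB * MulOpposite.op eqA
        = MulOpposite.op (eqA * (eqB * eqA)) := by
          rw [← MulOpposite.op_mul, ← MulOpposite.op_mul]
      _ = MulOpposite.op (eqB * (eqA * eqB)) := by rw [h2]
      _ = MulOpposite.op eqB * MulOpposite.op eqA * MulOpposite.op eqB := by
          rw [← MulOpposite.op_mul, ← MulOpposite.op_mul]

def fhom : B 3 →* (Equiv.Perm Vt)ᵐᵒᵖ := PresentedGroup.toGroup genPerm_rels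

/-- The (right) action of a braid on normal-form data. -/
def act (x : B 3) : Vt ≃ Vt := (fhom x).unop

lemma act_mul (x y : B 3) (d : Vt) : act (x * y) d = act y (act x d) := by
  unfold act
  rw [map_mul]
  rfl

lemma act_one (d : Vt) : act 1 d = d := by
  unfold act
  rw [map_one]
  rfl

lemma act_inv (x : B 3) (d : Vt) : act x⁻¹ d = (act x).symm d := by
  unfold act
  rw [map_inv]
  rfl

lemma fhom_s1 : fhom s1 = MulOpposite.op eqA := by
  have h := PresentedGroup.toGroup.of genPerm_rels (x := (⟨0, by norm_num⟩ : Fin 2))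
  exact h.trans (by simp [genPerm])

lemma fhom_s2 : fhom s2 = MulOpposite.op eqB := by
  have h := PresentedGroup.toGroup.of genPerm_rels (x := (⟨1, by norm_num⟩ : Fin 2))
  exact h.trans (by simp [genPerm])

lemma act_s1 (d : Vt) : (act s1 d).val = mulA d.val := by
  unfold act; rw [fhom_s1]; rfl

lemma act_s2 (d : Vt) : (act s2 d).val = mulB d.val := by
  unfold act; rw [fhom_s2]; rfl

lemma act_s1_inv (d : Vt) : (act s1⁻¹ d).val = invA d.val := by
  rw [act_inv]
  unfold act; rw [fhom_s1]; rfl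

lemma act_s2_inv (d : Vt) : (act s2⁻¹ d).val = invB d.val := by
  rw [act_inv]
  unfold act; rw [fhom_s2]; rfl

def d0 : Vt := ⟨(0, []), List.isChain_nil⟩

/-- The normal form invariant. -/
def Nf (x : B 3) : Vt := act x d0
/-! ### Evaluation of normal form data back into the braid group -/

def toB : S4 → B 3 | sa => s1 | sb => s2 | sab => s1*s2 | sba => s2*s1

def evalL : List S4 → B 3
  | [] => 1
  | a :: t => evalL t * toB a

def evalD (d : Dd) : B 3 := Δb 3 ^ d.1 * evalL d.2

lemma s1_delta : s1 * Δb 3 = Δb 3 * s2 := by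
  rw [delta_eq]
  calc s1 * (s1 * s2 * s1) = s1 * (s2 * s1 * s2) := by rw [braid_rel]
    _ = s1 * s2 * s1 * s2 := by group

lemma s2_delta : s2 * Δb 3 = Δb 3 * s1 := by
  rw [delta_eq]
  calc s2 * (s1 * s2 * s1) = s2 * s1 * s2 * s1 := by group
    _ = s1 * s2 * s1 * s1 := by rw [braid_rel]

lemma delta_toB_τs (s : S4) : Δb 3 * toB (τs s) = toB s * Δb 3 := by
  cases s
  · exact (s1_delta).symm
  · exact (s2_delta).symm
  · show Δb 3 * (s2 * s1) = s1 * s2 * Δb 3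
    calc Δb 3 * (s2 * s1) = (Δb 3 * s2) * s1 := by group
      _ = (s1 * Δb 3) * s1 := by rw [s1_delta]
      _ = s1 * (Δb 3 * s1) := by group
      _ = s1 * (s2 * Δb 3) := by rw [s2_delta]
      _ = s1 * s2 * Δb 3 := by group
  · show Δb 3 * (s1 * s2) = s2 * s1 * Δb 3
    calc Δb 3 * (s1 * s2) = (Δb 3 * s1) * s2 := by group
      _ = (s2 * Δb 3) * s2 := by rw [s2_delta]
      _ = s2 * (Δb 3 * s2) := by group
      _ = s2 * (s1 * Δb 3) := by rw [s1_delta]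
      _ = s2 * s1 * Δb 3 := by group

lemma delta_evalL_τs (F : List S4) : Δb 3 * evalL (F.map τs) = evalL F * Δb 3 := by
  induction F with
  | nil => simp [evalL]
  | cons a t ih =>
      show Δb 3 * (evalL (t.map τs) * toB (τs a)) = evalL t * toB a * Δb 3
      calc Δb 3 * (evalL (t.map τs) * toB (τs a))
          = (Δb 3 * evalL (t.map τs)) * toB (τs a) := by group
        _ = (evalL t * Δb 3) * toB (τs a) := by rw [ih]
        _ = evalL t * (Δb 3 * toB (τs a)) := by group
        _ = evalL t * (toB a * Δb 3) := by rw [delta_toB_τs]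
        _ = evalL t * toB a * Δb 3 := by group

lemma evalD_mulA (d : Dd) : evalD (mulA d) = evalD d * s1 := by
  obtain ⟨p, F⟩ := d
  rcases F with _ | ⟨a, t⟩
  · show Δb 3 ^ p * (1 * (gen 3 ⟨0, by norm_num⟩)) = Δb 3 ^ p * 1 * s1
    group
  · cases a
    · show Δb 3 ^ p * (evalL (sa :: t) * s1) = Δb 3 ^ p * evalL (sa :: t) * s1
      group
    · show Δb 3 ^ p * (evalL t * (s2 * s1)) = Δb 3 ^ p * (evalL t * s2) * s1
      group
    · show Δb 3 ^ (p+1) * evalL (t.map τs) = Δb 3 ^ p * (evalL t * (s1 * s2)) * s1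
      rw [zpow_add_one]
      calc Δb 3 ^ p * Δb 3 * evalL (t.map τs)
          = Δb 3 ^ p * (Δb 3 * evalL (t.map τs)) := by group
        _ = Δb 3 ^ p * (evalL t * Δb 3) := by rw [delta_evalL_τs]
        _ = Δb 3 ^ p * (evalL t * (s1 * s2 * s1)) := by rw [delta_eq]
        _ = Δb 3 ^ p * (evalL t * (s1 * s2)) * s1 := by group
    · show Δb 3 ^ p * (evalL (sba :: t) * s1) = Δb 3 ^ p * evalL (sba :: t) * s1
      group

lemma evalD_mulB (d : Dd) : evalD (mulB d) = evalD d * s2 := by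
  obtain ⟨p, F⟩ := d
  rcases F with _ | ⟨a, t⟩
  · show Δb 3 ^ p * (1 * (gen 3 ⟨1, by norm_num⟩)) = Δb 3 ^ p * 1 * s2
    group
  · cases a
    · show Δb 3 ^ p * (evalL t * (s1 * s2)) = Δb 3 ^ p * (evalL t * s1) * s2
      group
    · show Δb 3 ^ p * (evalL (sb :: t) * s2) = Δb 3 ^ p * evalL (sb :: t) * s2
      group
    · show Δb 3 ^ p * (evalL (sab :: t) * s2) = Δb 3 ^ p * evalL (sab :: t) * s2
      group
    · show Δb 3 ^ (p+1) * evalL (t.map τs) = Δb 3 ^ p * (evalL t * (s2 * s1)) * s2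
      rw [zpow_add_one]
      calc Δb 3 ^ p * Δb 3 * evalL (t.map τs)
          = Δb 3 ^ p * (Δb 3 * evalL (t.map τs)) := by group
        _ = Δb 3 ^ p * (evalL t * Δb 3) := by rw [delta_evalL_τs]
        _ = Δb 3 ^ p * (evalL t * (s2 * s1 * s2)) := by rw [delta_eq, braid_rel]
        _ = Δb 3 ^ p * (evalL t * (s2 * s1)) * s2 := by group

lemma evalD_act (y : B 3) : ∀ d : Vt, evalD (act y d).val = evalD d.val * y := by
  induction y using PresentedGroup.induction_on with
  | _ w =>
    refine FreeGroup.induction_on w ?_ ?_ ?_ ?_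
    · intro d
      rw [map_one (PresentedGroup.mk (braidRels 2))]
      rw [act_one, mul_one]
    · intro i d
      fin_cases i
      · show evalD (act s1 d).val = evalD d.val * s1
        rw [act_s1, evalD_mulA]
      · show evalD (act s2 d).val = evalD d.val * s2
        rw [act_s2, evalD_mulB]
    · intro i ih d
      rw [map_inv]
      generalize hG : (PresentedGroup.mk (braidRels (3-1))) (pure i) = g at *
      have key : act g (act g⁻¹ d) = d := by
        rw [← act_mul, inv_mul_cancel, act_one]
      have h2 := ih (act g⁻¹ d)
      rw [key] at h2
      rw [h2]
      group
    · intro x y ihx ihy d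
      rw [map_mul, act_mul, ihy, ihx]
      group

lemma evalD_Nf (x : B 3) : evalD (Nf x).val = x := by
  have h := evalD_act x d0
  have h0 : evalD d0.val = 1 := by
    show Δb 3 ^ (0 : ℤ) * 1 = 1
    group
  rw [Nf, h, h0, one_mul]

/-! ### The exponent sum homomorphism -/

lemma eps_rels : ∀ r ∈ braidRels 2,
    FreeGroup.lift (fun _ : Fin 2 => Multiplicative.ofAdd (1 : ℤ)) r = 1 := by
  rintro r (⟨i, j, _, rfl⟩ | ⟨i, j, _, rfl⟩) <;>
    · simp only [map_mul, map_inv, FreeGroup.lift_apply_of]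
      group

def epsHom : B 3 →* Multiplicative ℤ := PresentedGroup.toGroup eps_rels

def eps (x : B 3) : ℤ := Multiplicative.toAdd (epsHom x)

lemma eps_mul (x y : B 3) : eps (x * y) = eps x + eps y := by
  unfold eps; rw [map_mul]; rfl

lemma eps_one : eps 1 = 0 := by unfold eps; rw [map_one]; rfl

lemma eps_inv (x : B 3) : eps x⁻¹ = - eps x := by
  unfold eps; rw [map_inv]; rfl

lemma eps_gen (i : Fin 2) : eps (gen 3 i) = 1 := by
  unfold eps
  rw [show epsHom (gen 3 i) = Multiplicative.ofAdd 1 from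
    PresentedGroup.toGroup.of eps_rels]
  rfl

lemma eps_s1 : eps s1 = 1 := eps_gen _
lemma eps_s2 : eps s2 = 1 := eps_gen _

lemma pos_exists_list {x : B 3} (hx : x ∈ posMon 3) :
    ∃ l : List (B 3), (∀ y ∈ l, y ∈ Set.range (gen 3)) ∧ l.prod = x :=
  Submonoid.exists_list_of_mem_closure hx

lemma eps_list {l : List (B 3)} (h : ∀ y ∈ l, y ∈ Set.range (gen 3)) :
    eps l.prod = l.length := by
  induction l with
  | nil => simpa using eps_one
  | cons a t ih =>
      rw [List.prod_cons, eps_mul]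
      obtain ⟨i, rfl⟩ := h a (List.mem_cons_self)
      rw [eps_gen, ih (fun y hy => h y (List.mem_cons_of_mem _ hy))]
      simp
      ring

lemma eps_nonneg_of_pos {x : B 3} (hx : x ∈ posMon 3) : 0 ≤ eps x := by
  obtain ⟨l, hl, rfl⟩ := pos_exists_list hx
  rw [eps_list hl]
  positivity

lemma eq_one_of_pos_eps_zero {x : B 3} (hx : x ∈ posMon 3) (h0 : eps x = 0) :
    x = 1 := by
  obtain ⟨l, hl, rfl⟩ := pos_exists_list hx
  rw [eps_list hl] at h0
  have : l = [] := by
    cases l with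
    | nil => rfl
    | cons a t => exfalso; simp at h0; omega
  rw [this, List.prod_nil]

/-! ### Positivity criterion -/

lemma s1_pos : s1 ∈ posMon 3 := Submonoid.subset_closure ⟨_, rfl⟩
lemma s2_pos : s2 ∈ posMon 3 := Submonoid.subset_closure ⟨_, rfl⟩

lemma delta_pos : Δb 3 ∈ posMon 3 := by
  rw [delta_eq]; exact mul_mem (mul_mem s1_pos s2_pos) s1_pos

lemma toB_pos (c : S4) : toB c ∈ posMon 3 := by
  cases c
  · exact s1_pos
  · exact s2_pos
  · exact mul_mem s1_pos s2_pos
  · exact mul_mem s2_pos s1_pos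

lemma evalL_pos (F : List S4) : evalL F ∈ posMon 3 := by
  induction F with
  | nil => exact one_mem _
  | cons a t ih => exact mul_mem ih (toB_pos a)

lemma zpow_delta_pos {p : ℤ} (hp : 0 ≤ p) : Δb 3 ^ p ∈ posMon 3 := by
  rw [← Int.toNat_of_nonneg hp, zpow_natCast]
  exact pow_mem delta_pos _

lemma act_fst_mono {y : B 3} (hy : y ∈ posMon 3) :
    ∀ d : Vt, d.val.1 ≤ (act y d).val.1 := by
  refine Submonoid.closure_induction
    (motive := fun y _ => ∀ d : Vt, d.val.1 ≤ (act y d).val.1) ?_ ?_ ?_ hy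
  · rintro y ⟨i, rfl⟩ d
    fin_cases i
    · show d.val.1 ≤ (act s1 d).val.1
      rw [act_s1]
      exact mulA_fst_mono d.val
    · show d.val.1 ≤ (act s2 d).val.1
      rw [act_s2]
      exact mulB_fst_mono d.val
  · intro d; rw [act_one]
  · intro a b _ _ iha ihb d
    rw [act_mul]
    exact le_trans (iha d) (ihb (act a d))

lemma pos_iff_Nf {x : B 3} : x ∈ posMon 3 ↔ 0 ≤ (Nf x).val.1 := by
  constructor
  · intro hx
    have := act_fst_mono hx d0
    simpa [Nf, d0] using this
  · intro hp
    have := evalD_Nf x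
    rw [← this]
    exact mul_mem (zpow_delta_pos hp) (evalL_pos _)
/-! ### Concrete computations -/

lemma Nf_mul_s1 (x : B 3) : (Nf (x * s1)).val = mulA (Nf x).val := by
  rw [Nf, Nf, act_mul, act_s1]

lemma Nf_mul_s2 (x : B 3) : (Nf (x * s2)).val = mulB (Nf x).val := by
  rw [Nf, Nf, act_mul, act_s2]

lemma Nf_mul_s1_inv (x : B 3) : (Nf (x * s1⁻¹)).val = invA (Nf x).val := by
  rw [Nf, Nf, act_mul, act_s1_inv]

lemma Nf_mul_s2_inv (x : B 3) : (Nf (x * s2⁻¹)).val = invB (Nf x).val := by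
  rw [Nf, Nf, act_mul, act_s2_inv]

lemma Nf_one : (Nf 1).val = ((0 : ℤ), ([] : List S4)) := by
  rw [Nf, act_one]
  rfl

lemma not_pos_of_Nf_neg {x : B 3} (h : (Nf x).val.1 < 0) : x ∉ posMon 3 := by
  intro hx
  have := pos_iff_Nf.mp hx
  omega

lemma nE : s2⁻¹ * s1 ∉ posMon 3 := by
  apply not_pos_of_Nf_neg
  have e1 : s2⁻¹ * s1 = (1 * s2⁻¹) * s1 := by group
  rw [e1, Nf_mul_s1, Nf_mul_s2_inv, Nf_one]
  decide

lemma nF : s1⁻¹ * s2 ∉ posMon 3 := by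
  apply not_pos_of_Nf_neg
  have e1 : s1⁻¹ * s2 = (1 * s1⁻¹) * s2 := by group
  rw [e1, Nf_mul_s2, Nf_mul_s1_inv, Nf_one]
  decide

lemma nA : s1⁻¹ * (s2 * s1) ∉ posMon 3 := by
  apply not_pos_of_Nf_neg
  have e1 : s1⁻¹ * (s2 * s1) = (((1 * s1⁻¹) * s2) * s1) := by group
  rw [e1, Nf_mul_s1, Nf_mul_s2, Nf_mul_s1_inv, Nf_one]
  decide

lemma nC : s2⁻¹ * (s1 * s2) ∉ posMon 3 := by
  apply not_pos_of_Nf_neg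
  have e1 : s2⁻¹ * (s1 * s2) = (((1 * s2⁻¹) * s1) * s2) := by group
  rw [e1, Nf_mul_s2, Nf_mul_s1, Nf_mul_s2_inv, Nf_one]
  decide

lemma nB : (s1 * s2)⁻¹ * (s2 * s1) ∉ posMon 3 := by
  apply not_pos_of_Nf_neg
  have e1 : (s1 * s2)⁻¹ * (s2 * s1) = ((((1 * s2⁻¹) * s1⁻¹) * s2) * s1) := by group
  rw [e1, Nf_mul_s1, Nf_mul_s2, Nf_mul_s1_inv, Nf_mul_s2_inv, Nf_one]
  decide

lemma nD : (s2 * s1)⁻¹ * (s1 * s2) ∉ posMon 3 := by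
  apply not_pos_of_Nf_neg
  have e1 : (s2 * s1)⁻¹ * (s1 * s2) = ((((1 * s1⁻¹) * s2⁻¹) * s1) * s2) := by group
  rw [e1, Nf_mul_s2, Nf_mul_s1, Nf_mul_s2_inv, Nf_mul_s1_inv, Nf_one]
  decide

lemma nG : (s2 * s2)⁻¹ * (s1 * s2) ∉ posMon 3 := by
  apply not_pos_of_Nf_neg
  have e1 : (s2 * s2)⁻¹ * (s1 * s2) = ((((1 * s2⁻¹) * s2⁻¹) * s1) * s2) := by group
  rw [e1, Nf_mul_s2, Nf_mul_s1, Nf_mul_s2_inv, Nf_mul_s2_inv, Nf_one]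
  decide

lemma s1_ne_one : s1 ≠ (1 : B 3) := by
  intro h
  have := eps_s1
  rw [h, eps_one] at this
  omega

lemma s2_ne_one : s2 ≠ (1 : B 3) := by
  intro h
  have := eps_s2
  rw [h, eps_one] at this
  omega

lemma eps_delta : eps (Δb 3) = 3 := by
  rw [delta_eq, eps_mul, eps_mul, eps_s1, eps_s2]
  norm_num

lemma eps_toB (c : S4) : eps (toB c) ≤ 2 := by
  cases c <;> simp [toB, eps_mul, eps_s1, eps_s2]

/-- classification of positive elements of exponent sum `< 3` -/
lemma pos_lt3_classify {t : B 3} (ht : t ∈ posMon 3) (h : eps t < 3) :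
    t = 1 ∨ t = s1 ∨ t = s2 ∨ t = s1*s1 ∨ t = s1*s2 ∨ t = s2*s1 ∨ t = s2*s2 := by
  obtain ⟨l, hl, rfl⟩ := pos_exists_list ht
  rw [eps_list hl] at h
  have hgen : ∀ y ∈ l, y = s1 ∨ y = s2 := by
    intro y hy
    obtain ⟨i, rfl⟩ := hl y hy
    fin_cases i
    · left; rfl
    · right; rfl
  rcases l with _ | ⟨a, _ | ⟨b, _ | ⟨c, r⟩⟩⟩
  · left; rfl
  · have := hgen a (by simp)
    rcases this with rfl | rfl
    · right; left; simp
    · right; right; left; simp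
  · have ha := hgen a (by simp)
    have hb := hgen b (by simp)
    have hprod : (a :: b :: ([] : List (B 3))).prod = a * b := by simp
    rcases ha with rfl | rfl <;> rcases hb with rfl | rfl <;> simp [hprod] <;> tauto
  · exfalso
    simp [List.length_cons] at h
    omega

lemma dcompl_sa : dcompl 3 (toB sa) = s2 * s1 := by
  show s1⁻¹ * Δb 3 = s2 * s1
  rw [delta_eq]; group

lemma dcompl_sb : dcompl 3 (toB sb) = s1 * s2 := by
  show s2⁻¹ * Δb 3 = s1 * s2
  rw [delta_eq, braid_rel]; group

lemma dcompl_sab : dcompl 3 (toB sab) = s1 := by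
  show (s1 * s2)⁻¹ * Δb 3 = s1
  rw [delta_eq]; group

lemma dcompl_sba : dcompl 3 (toB sba) = s2 := by
  show (s2 * s1)⁻¹ * Δb 3 = s2
  rw [delta_eq, braid_rel]; group

lemma not_pref_eps {u v : B 3} (h : eps v < eps u) : ¬ Pref 3 u v := by
  intro hp
  have h1 := eps_nonneg_of_pos hp
  rw [eps_mul, eps_inv] at h1
  omega

lemma pref_trans_elt {t v w : B 3} (h : t⁻¹ * v = w) (hw : w ∉ posMon 3) :
    ¬ Pref 3 t v := by
  intro hp
  rw [Pref, h] at hp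
  exact hw hp

/-- The semantic left-weightedness of a pair implies the combinatorial condition. -/
lemma nxt_of_lw {a b : S4} (h : LeftWeighted 3 (toB a) (toB b)) : nxt a b = true := by
  by_contra hn
  have hnot : ∀ t : B 3, t ∈ posMon 3 → Pref 3 t (toB b) → Pref 3 t (dcompl 3 (toB a)) →
      t = 1 := by
    intro t h1 h2 h3
    exact h t (by simpa [Pref] using h1) h2 h3
  cases a <;> cases b <;> simp [nxt] at hn <;>
  [ -- (sa, sb)
    (exact s2_ne_one (hnot s2 s2_pos (by simp [Pref, toB])
      (by rw [Pref, dcompl_sa, show s2⁻¹ * (s2 * s1) = s1 by group]; exact s1_pos)));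
    -- (sa, sba)
    (exact s2_ne_one (hnot s2 s2_pos (by rw [Pref, show s2⁻¹ * toB sba = s1 by simp [toB]]; exact s1_pos)
      (by rw [Pref, dcompl_sa, show s2⁻¹ * (s2 * s1) = s1 by group]; exact s1_pos)));
    -- (sb, sa)
    (exact s1_ne_one (hnot s1 s1_pos (by rw [Pref, show s1⁻¹ * toB sa = 1 by simp [toB]]; exact one_mem _)
      (by rw [Pref, dcompl_sb, show s1⁻¹ * (s1 * s2) = s2 by group]; exact s2_pos)));
    -- (sb, sab)
    (exact s1_ne_one (hnot s1 s1_pos (by rw [Pref, show s1⁻¹ * toB sab = s2 by simp [toB]]; exact s2_pos)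
      (by rw [Pref, dcompl_sb, show s1⁻¹ * (s1 * s2) = s2 by group]; exact s2_pos)));
    -- (sab, sa)
    (exact s1_ne_one (hnot s1 s1_pos (by rw [Pref, show s1⁻¹ * toB sa = 1 by simp [toB]]; exact one_mem _)
      (by rw [Pref, dcompl_sab, show s1⁻¹ * s1 = 1 by group]; exact one_mem _)));
    -- (sab, sab)
    (exact s1_ne_one (hnot s1 s1_pos (by rw [Pref, show s1⁻¹ * toB sab = s2 by simp [toB]]; exact s2_pos)
      (by rw [Pref, dcompl_sab, show s1⁻¹ * s1 = 1 by group]; exact one_mem _)));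
    -- (sba, sb)
    (exact s2_ne_one (hnot s2 s2_pos (by rw [Pref, show s2⁻¹ * toB sb = 1 by simp [toB]]; exact one_mem _)
      (by rw [Pref, dcompl_sba, show s2⁻¹ * s2 = 1 by group]; exact one_mem _)));
    -- (sba, sba)
    (exact s2_ne_one (hnot s2 s2_pos (by rw [Pref, show s2⁻¹ * toB sba = s1 by simp [toB]]; exact s1_pos)
      (by rw [Pref, dcompl_sba, show s2⁻¹ * s2 = 1 by group]; exact one_mem _)))]
/-- Combinatorial condition implies semantic left-weightedness. -/
lemma lw_of_nxt {a b : S4} (h : nxt a b = true) : LeftWeighted 3 (toB a) (toB b) := by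
  intro t h1 h2 h3
  have ht : t ∈ posMon 3 := by simpa [Pref] using h1
  have heps : eps t < 3 := by
    have h2' : t⁻¹ * toB b ∈ posMon 3 := h2
    have hh := eps_nonneg_of_pos h2'
    rw [eps_mul, eps_inv] at hh
    have := eps_toB b
    omega
  by_contra hne
  cases a <;> cases b <;> simp only [nxt] at h <;> try exact absurd h (by decide)
  -- (sa, sa)
  · rw [dcompl_sa] at h3
    rcases pos_lt3_classify ht heps with rfl|rfl|rfl|rfl|rfl|rfl|rfl
    · exact hne rfl
    · exact absurd h3 (pref_trans_elt (by group) nA)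
    · exact absurd h2 (pref_trans_elt (by simp only [toB]) nE)
    · exact absurd h2 (not_pref_eps (by simp only [toB, eps_mul, eps_s1, eps_s2]; norm_num))
    · exact absurd h2 (not_pref_eps (by simp only [toB, eps_mul, eps_s1, eps_s2]; norm_num))
    · exact absurd h2 (not_pref_eps (by simp only [toB, eps_mul, eps_s1, eps_s2]; norm_num))
    · exact absurd h2 (not_pref_eps (by simp only [toB, eps_mul, eps_s1, eps_s2]; norm_num))
  -- (sa, sab)
  · rw [dcompl_sa] at h3
    rcases pos_lt3_classify ht heps with rfl|rfl|rfl|rfl|rfl|rfl|rfl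
    · exact hne rfl
    · exact absurd h3 (pref_trans_elt (by group) nA)
    · exact absurd h2 (pref_trans_elt (by simp only [toB]) nC)
    · exact absurd h2 (pref_trans_elt (by simp only [toB]; group) nF)
    · exact absurd h3 (pref_trans_elt (by group) nB)
    · exact absurd h2 (pref_trans_elt (by simp only [toB]) nD)
    · exact absurd h3 (pref_trans_elt (by group) nE)
  -- (sb, sb)
  · rw [dcompl_sb] at h3
    rcases pos_lt3_classify ht heps with rfl|rfl|rfl|rfl|rfl|rfl|rfl
    · exact hne rfl
    · exact absurd h2 (pref_trans_elt (by simp only [toB]) nF)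
    · exact absurd h3 (pref_trans_elt (by group) nC)
    · exact absurd h2 (not_pref_eps (by simp only [toB, eps_mul, eps_s1, eps_s2]; norm_num))
    · exact absurd h2 (not_pref_eps (by simp only [toB, eps_mul, eps_s1, eps_s2]; norm_num))
    · exact absurd h2 (not_pref_eps (by simp only [toB, eps_mul, eps_s1, eps_s2]; norm_num))
    · exact absurd h2 (not_pref_eps (by simp only [toB, eps_mul, eps_s1, eps_s2]; norm_num))
  -- (sb, sba)
  · rw [dcompl_sb] at h3
    rcases pos_lt3_classify ht heps with rfl|rfl|rfl|rfl|rfl|rfl|rfl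
    · exact hne rfl
    · exact absurd h2 (pref_trans_elt (by simp only [toB]) nA)
    · exact absurd h3 (pref_trans_elt (by group) nC)
    · exact absurd h3 (pref_trans_elt (by group) nF)
    · exact absurd h2 (pref_trans_elt (by simp only [toB]) nB)
    · exact absurd h3 (pref_trans_elt (by group) nD)
    · exact absurd h2 (pref_trans_elt (by simp only [toB]; group) nE)
  -- (sab, sb)
  · rw [dcompl_sab] at h3
    rcases pos_lt3_classify ht heps with rfl|rfl|rfl|rfl|rfl|rfl|rfl
    · exact hne rfl
    · exact absurd h2 (pref_trans_elt (by simp only [toB]) nF)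
    · exact absurd h3 (pref_trans_elt (by group) nE)
    · exact absurd h2 (not_pref_eps (by simp only [toB, eps_mul, eps_s1, eps_s2]; norm_num))
    · exact absurd h2 (not_pref_eps (by simp only [toB, eps_mul, eps_s1, eps_s2]; norm_num))
    · exact absurd h2 (not_pref_eps (by simp only [toB, eps_mul, eps_s1, eps_s2]; norm_num))
    · exact absurd h2 (not_pref_eps (by simp only [toB, eps_mul, eps_s1, eps_s2]; norm_num))
  -- (sab, sba)
  · rw [dcompl_sab] at h3
    rcases pos_lt3_classify ht heps with rfl|rfl|rfl|rfl|rfl|rfl|rfl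
    · exact hne rfl
    · exact absurd h2 (pref_trans_elt (by simp only [toB]) nA)
    · exact absurd h3 (pref_trans_elt (by group) nE)
    · exact absurd h3 (not_pref_eps (by simp only [toB, eps_mul, eps_s1, eps_s2]; norm_num))
    · exact absurd h3 (not_pref_eps (by simp only [toB, eps_mul, eps_s1, eps_s2]; norm_num))
    · exact absurd h3 (not_pref_eps (by simp only [toB, eps_mul, eps_s1, eps_s2]; norm_num))
    · exact absurd h2 (pref_trans_elt (by simp only [toB]; group) nE)
  -- (sba, sa)
  · rw [dcompl_sba] at h3
    rcases pos_lt3_classify ht heps with rfl|rfl|rfl|rfl|rfl|rfl|rfl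
    · exact hne rfl
    · exact absurd h3 (pref_trans_elt (by group) nF)
    · exact absurd h2 (pref_trans_elt (by simp only [toB]) nE)
    · exact absurd h2 (not_pref_eps (by simp only [toB, eps_mul, eps_s1, eps_s2]; norm_num))
    · exact absurd h2 (not_pref_eps (by simp only [toB, eps_mul, eps_s1, eps_s2]; norm_num))
    · exact absurd h2 (not_pref_eps (by simp only [toB, eps_mul, eps_s1, eps_s2]; norm_num))
    · exact absurd h2 (not_pref_eps (by simp only [toB, eps_mul, eps_s1, eps_s2]; norm_num))
  -- (sba, sab)
  · rw [dcompl_sba] at h3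
    rcases pos_lt3_classify ht heps with rfl|rfl|rfl|rfl|rfl|rfl|rfl
    · exact hne rfl
    · exact absurd h3 (pref_trans_elt (by group) nF)
    · exact absurd h2 (pref_trans_elt (by simp only [toB]) nC)
    · exact absurd h3 (not_pref_eps (by simp only [toB, eps_mul, eps_s1, eps_s2]; norm_num))
    · exact absurd h3 (not_pref_eps (by simp only [toB, eps_mul, eps_s1, eps_s2]; norm_num))
    · exact absurd h3 (not_pref_eps (by simp only [toB, eps_mul, eps_s1, eps_s2]; norm_num))
    · exact absurd h2 (pref_trans_elt (by simp only [toB]) nG)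

/-- Classification of the nontrivial non-Δ simple elements of `B 3`. -/
lemma simple_classify {s : B 3} (hsimp : IsSimple 3 s) (h1 : s ≠ 1) (hD : s ≠ Δb 3) :
    ∃ c : S4, s = toB c := by
  obtain ⟨hp, hq⟩ := hsimp
  have hs : s ∈ posMon 3 := by simpa [Pref] using hp
  have hds : s⁻¹ * Δb 3 ∈ posMon 3 := hq
  have he3 : eps s ≤ 3 := by
    have := eps_nonneg_of_pos hds
    rw [eps_mul, eps_inv, eps_delta] at this
    omega
  have hne3 : eps s ≠ 3 := by
    intro h3
    apply hD
    have h0 : eps (s⁻¹ * Δb 3) = 0 := by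
      rw [eps_mul, eps_inv, eps_delta, h3]; ring
    have h1' := eq_one_of_pos_eps_zero hds h0
    have h2' := congrArg (fun z => s * z) h1'
    exact (by simpa [← mul_assoc] using h2' : Δb 3 = s).symm
  rcases pos_lt3_classify hs (by omega) with rfl|rfl|rfl|rfl|rfl|rfl|rfl
  · exact absurd rfl h1
  · exact ⟨sa, rfl⟩
  · exact ⟨sb, rfl⟩
  · exfalso
    apply nA
    rw [show s1⁻¹ * (s2 * s1) = (s1*s1)⁻¹ * Δb 3 by rw [delta_eq]; group]
    exact hds
  · exact ⟨sab, rfl⟩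
  · exact ⟨sba, rfl⟩
  · exfalso
    apply nC
    rw [show s2⁻¹ * (s1 * s2) = (s2*s2)⁻¹ * Δb 3 by rw [delta_eq, braid_rel]; group]
    exact hds
/-! ### `Nf` is a retraction of evaluation: uniqueness of normal forms -/

lemma Nf_mul (x y : B 3) : Nf (x * y) = act y (Nf x) := act_mul x y d0

lemma act_delta (d : Vt) : (act (Δb 3) d).val = shiftU d.val := by
  rw [delta_eq, act_mul, act_mul, act_s1, act_s2, act_s1]
  exact delta_step d.2

lemma shiftU_shiftD (d : Dd) : shiftU (shiftD d) = d := by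
  obtain ⟨p, F⟩ := d
  simp [shiftU, shiftD]

lemma act_delta_inv (d : Vt) : (act (Δb 3)⁻¹ d).val = shiftD d.val := by
  have hval : ValidL (shiftD d.val).2 := validL_shiftD d.2
  have h1 : act (Δb 3) ⟨shiftD d.val, hval⟩ = d := by
    apply Subtype.ext
    rw [act_delta]
    exact shiftU_shiftD d.val
  calc (act (Δb 3)⁻¹ d).val
      = (act (Δb 3)⁻¹ (act (Δb 3) ⟨shiftD d.val, hval⟩)).val := by rw [h1]
    _ = shiftD d.val := by rw [← act_mul, mul_inv_cancel, act_one]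

lemma Nf_delta_pow : ∀ p : ℤ, (Nf (Δb 3 ^ p)).val = (p, ([] : List S4)) := by
  intro p
  induction p using Int.induction_on with
  | zero => rw [zpow_zero]; exact Nf_one
  | succ n ih =>
      rw [zpow_add_one, Nf_mul, act_delta, ih]
      rfl
  | pred n ih =>
      rw [zpow_sub_one, Nf_mul, act_delta_inv, ih]
      rfl

lemma evalD_cons (p : ℤ) (a : S4) (t : List S4) :
    evalD (p, a :: t) = evalD (p, t) * toB a := by
  show Δb 3 ^ p * (evalL t * toB a) = Δb 3 ^ p * evalL t * toB a
  group

lemma mulA_fit {p : ℤ} {t : List S4} (h : ValidL (sa :: t)) :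
    mulA (p, t) = (p, sa :: t) := by
  rcases t with _ | ⟨b, t'⟩
  · rfl
  · have hb := (List.isChain_cons_cons.mp h).1
    cases b <;> simp_all [mulA, nxt]

lemma mulB_fit {p : ℤ} {t : List S4} (h : ValidL (sb :: t)) :
    mulB (p, t) = (p, sb :: t) := by
  rcases t with _ | ⟨b, t'⟩
  · rfl
  · have hb := (List.isChain_cons_cons.mp h).1
    cases b <;> simp_all [mulB, nxt]

lemma sab_fit {p : ℤ} {t : List S4} (h : ValidL (sab :: t)) :
    mulB (mulA (p, t)) = (p, sab :: t) := by
  rcases t with _ | ⟨b, t'⟩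
  · rfl
  · have hb := (List.isChain_cons_cons.mp h).1
    cases b <;> simp_all [mulA, mulB, nxt]

lemma sba_fit {p : ℤ} {t : List S4} (h : ValidL (sba :: t)) :
    mulA (mulB (p, t)) = (p, sba :: t) := by
  rcases t with _ | ⟨b, t'⟩
  · rfl
  · have hb := (List.isChain_cons_cons.mp h).1
    cases b <;> simp_all [mulA, mulB, nxt]

lemma Nf_eval_valid : ∀ (M : List S4) (p : ℤ), ValidL M →
    (Nf (evalD (p, M))).val = (p, M) := by
  intro M
  induction M with
  | nil =>
      intro p _
      show (Nf (Δb 3 ^ p * 1)).val = _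
      rw [mul_one]
      exact Nf_delta_pow p
  | cons a t ih =>
      intro p hM
      rw [evalD_cons]
      have htv : ValidL t := hM.tail
      cases a
      · rw [show toB sa = s1 from rfl, Nf_mul_s1, ih p htv, mulA_fit hM]
      · rw [show toB sb = s2 from rfl, Nf_mul_s2, ih p htv, mulB_fit hM]
      · rw [show toB sab = s1 * s2 from rfl, ← mul_assoc, Nf_mul_s2, Nf_mul_s1,
          ih p htv, sab_fit hM]
      · rw [show toB sba = s2 * s1 from rfl, ← mul_assoc, Nf_mul_s1, Nf_mul_s2,
          ih p htv, sba_fit hM]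

lemma evalL_eq_prod (M : List S4) : ((M.map toB).reverse).prod = evalL M := by
  induction M with
  | nil => rfl
  | cons a t ih =>
      show ((toB a :: t.map toB).reverse).prod = evalL t * toB a
      rw [List.reverse_cons, List.prod_append, ih]
      simp

lemma encode_main : ∀ (L : List (B 3)), (∀ s ∈ L, ∃ c : S4, s = toB c) →
    (∀ i : ℕ, i + 1 < L.length → LeftWeighted 3 (L.getD i 1) (L.getD (i+1) 1)) →
    ∃ M : List S4, ValidL M ∧ L = (M.map toB).reverse := by
  intro L
  induction L with
  | nil => intro _ _; exact ⟨[], List.isChain_nil, rfl⟩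
  | cons s t ih =>
      intro hfac hlw
      obtain ⟨M', hM'v, hM'⟩ := ih (fun y hy => hfac y (List.mem_cons_of_mem _ hy))
        (fun i hi => by
          have := hlw (i+1) (by simpa using Nat.succ_lt_succ hi)
          simpa using this)
      obtain ⟨c, rfl⟩ := hfac s (List.mem_cons_self)
      refine ⟨M' ++ [c], ?_, ?_⟩
      · unfold ValidL List.Chain'
        rw [List.isChain_append]
        refine ⟨hM'v, List.isChain_singleton c, ?_⟩
        intro x hx y hy
        rcases M' with _ | ⟨m, M''⟩
        · simp at hx
        · simp only [List.head?_cons, Option.mem_some_iff] at hy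
          subst hy
          -- x is the last element of m :: M''
          have hxl : x = (m :: M'').getLast (by simp) := by
            rw [List.getLast?_eq_getLast (by simp)] at hx
            exact (Option.mem_some_iff.mp hx).symm
          subst hxl
          -- t.head corresponds to toB of last of M'
          have hhead : t.getD 0 1 = toB ((m :: M'').getLast (by simp)) := by
            rw [hM']
            rw [List.getD_eq_getElem?_getD]
            rw [← List.map_reverse]
            simp only [List.getElem?_map]
            rw [List.getElem?_reverse (by simp)]
            simp [List.getLast_eq_getElem]
          have hLW := hlw 0 (by
            rw [hM']
            simp [List.length_reverse])
          simp only [List.getD_cons_zero, List.getD_cons_succ] at hLW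
          rw [hhead] at hLW
          exact nxt_of_lw hLW
      · rw [List.map_append, List.reverse_append, ← hM']
        simp
  
/-- Uniqueness of left normal forms in `B 3`. -/
lemma isLNF_Nf {x : B 3} {p : ℤ} {L : List (B 3)} (h : IsLNF 3 x p L) :
    ∃ M : List S4, ValidL M ∧ (Nf x).val = (p, M) ∧ L = (M.map toB).reverse := by
  obtain ⟨hx, hfac, hlw⟩ := h
  have hfac' : ∀ s ∈ L, ∃ c : S4, s = toB c := by
    intro s hs
    obtain ⟨h1, h2, h3⟩ := hfac s hs
    exact simple_classify h1 h2 h3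
  obtain ⟨M, hMv, hML⟩ := encode_main L hfac' hlw
  refine ⟨M, hMv, ?_, hML⟩
  have hxe : x = evalD (p, M) := by
    rw [hx, hML, evalL_eq_prod]
    rfl
  rw [hxe]
  exact Nf_eval_valid M p hMv

lemma lnf_unique {x : B 3} {p p' : ℤ} {L L' : List (B 3)}
    (h : IsLNF 3 x p L) (h' : IsLNF 3 x p' L') : p = p' ∧ L = L' := by
  obtain ⟨M, _, hNf, hL⟩ := isLNF_Nf h
  obtain ⟨M', _, hNf', hL'⟩ := isLNF_Nf h'
  rw [hNf] at hNf'
  have hp : p = p' := congrArg Prod.fst hNf'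
  have hM : M = M' := congrArg Prod.snd hNf'
  exact ⟨hp, by rw [hL, hL', hM]⟩
/-! ### Properties of τ -/

lemma τpow_def (k : ℤ) (x : B 3) : τpow 3 k x = (Δb 3)^(-k) * x * (Δb 3)^k := rfl

lemma τpow_add (j k : ℤ) (x : B 3) : τpow 3 j (τpow 3 k x) = τpow 3 (j+k) x := by
  simp only [τpow_def]
  rw [neg_add, zpow_add, zpow_add]
  group

lemma τpow_zero (x : B 3) : τpow 3 0 x = x := by
  simp [τpow_def]

lemma τpow_mul (k : ℤ) (x y : B 3) : τpow 3 k (x * y) = τpow 3 k x * τpow 3 k y := by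
  simp only [τpow_def]
  group

lemma τpow_one_elem (k : ℤ) : τpow 3 k (1 : B 3) = 1 := by
  simp [τpow_def]

lemma τpow_inj (k : ℤ) {x y : B 3} (h : τpow 3 k x = τpow 3 k y) : x = y := by
  have := congrArg (τpow 3 (-k)) h
  rwa [τpow_add, τpow_add, neg_add_cancel, τpow_zero, τpow_zero] at this

lemma τpow_delta (k : ℤ) : τpow 3 k (Δb 3) = Δb 3 := by
  simp only [τpow_def]
  group

lemma τ_s1 : τpow 3 1 s1 = s2 := by
  simp only [τpow_def, zpow_one, zpow_neg_one]
  rw [mul_assoc, s1_delta]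
  group

lemma τ_s2 : τpow 3 1 s2 = s1 := by
  simp only [τpow_def, zpow_one, zpow_neg_one]
  rw [mul_assoc, s2_delta]
  group

lemma τ_neg_s1 : τpow 3 (-1) s1 = s2 := by
  have : τpow 3 (-1) (τpow 3 1 s2) = s2 := by
    rw [τpow_add]; simpa using τpow_zero s2
  rw [τ_s2] at this
  exact this.symm ▸ this

lemma τ_neg_s2 : τpow 3 (-1) s2 = s1 := by
  have : τpow 3 (-1) (τpow 3 1 s1) = s1 := by
    rw [τpow_add]; simpa using τpow_zero s1
  rw [τ_s1] at this
  exact this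

lemma τ_pos_one {x : B 3} (hx : x ∈ posMon 3) : τpow 3 1 x ∈ posMon 3 := by
  refine Submonoid.closure_induction
    (motive := fun y _ => τpow 3 1 y ∈ posMon 3) ?_ ?_ ?_ hx
  · rintro y ⟨i, rfl⟩
    fin_cases i
    · show τpow 3 1 s1 ∈ posMon 3
      rw [τ_s1]; exact s2_pos
    · show τpow 3 1 s2 ∈ posMon 3
      rw [τ_s2]; exact s1_pos
  · show τpow 3 1 (1 : B 3) ∈ posMon 3
    rw [τpow_one_elem]; exact one_mem _
  · intro a b _ _ iha ihb
    show τpow 3 1 (a * b) ∈ posMon 3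
    rw [τpow_mul]
    exact mul_mem iha ihb

lemma τ_pos_neg_one {x : B 3} (hx : x ∈ posMon 3) : τpow 3 (-1) x ∈ posMon 3 := by
  refine Submonoid.closure_induction
    (motive := fun y _ => τpow 3 (-1) y ∈ posMon 3) ?_ ?_ ?_ hx
  · rintro y ⟨i, rfl⟩
    fin_cases i
    · show τpow 3 (-1) s1 ∈ posMon 3
      rw [τ_neg_s1]; exact s2_pos
    · show τpow 3 (-1) s2 ∈ posMon 3
      rw [τ_neg_s2]; exact s1_pos
  · show τpow 3 (-1) (1 : B 3) ∈ posMon 3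
    rw [τpow_one_elem]; exact one_mem _
  · intro a b _ _ iha ihb
    show τpow 3 (-1) (a * b) ∈ posMon 3
    rw [τpow_mul]
    exact mul_mem iha ihb

lemma τpow_pos (k : ℤ) {x : B 3} (hx : x ∈ posMon 3) : τpow 3 k x ∈ posMon 3 := by
  induction k using Int.induction_on with
  | zero => rwa [τpow_zero]
  | succ n ih =>
      have : τpow 3 ((n : ℤ) + 1) x = τpow 3 1 (τpow 3 n x) := by
        rw [τpow_add, add_comm]
      rw [this]
      exact τ_pos_one ih
  | pred n ih =>
      have : τpow 3 (-(n : ℤ) - 1) x = τpow 3 (-1) (τpow 3 (-n) x) := by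
        rw [τpow_add]; ring_nf
      rw [this]
      exact τ_pos_neg_one ih

lemma τpow_pref (k : ℤ) {a b : B 3} (h : Pref 3 a b) :
    Pref 3 (τpow 3 k a) (τpow 3 k b) := by
  have : (τpow 3 k a)⁻¹ * τpow 3 k b = τpow 3 k (a⁻¹ * b) := by
    simp only [τpow_def]; group
  rw [Pref, this]
  exact τpow_pos k h

lemma τpow_dcompl (k : ℤ) (a : B 3) :
    dcompl 3 (τpow 3 k a) = τpow 3 k (dcompl 3 a) := by
  show (τpow 3 k a)⁻¹ * Δb 3 = τpow 3 k (a⁻¹ * Δb 3)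
  simp only [τpow_def]
  group

lemma τpow_simple (k : ℤ) {s : B 3} (h : IsSimple 3 s) : IsSimple 3 (τpow 3 k s) := by
  obtain ⟨h1, h2⟩ := h
  constructor
  · have := τpow_pref k h1
    rwa [τpow_one_elem] at this
  · have := τpow_pref k h2
    rwa [τpow_delta] at this

lemma τpow_ne_one (k : ℤ) {s : B 3} (h : s ≠ 1) : τpow 3 k s ≠ 1 := by
  intro hc
  exact h (τpow_inj k (by rwa [τpow_one_elem]))

lemma τpow_ne_delta (k : ℤ) {s : B 3} (h : s ≠ Δb 3) : τpow 3 k s ≠ Δb 3 := by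
  intro hc
  exact h (τpow_inj k (by rwa [τpow_delta]))

lemma τpow_lw (k : ℤ) {a b : B 3} (h : LeftWeighted 3 a b) :
    LeftWeighted 3 (τpow 3 k a) (τpow 3 k b) := by
  intro t h1 h2 h3
  have ht1 : Pref 3 1 (τpow 3 (-k) t) := by
    have : t ∈ posMon 3 := by simpa [Pref] using h1
    have := τpow_pos (-k) this
    simpa [Pref] using this
  have ht2 : Pref 3 (τpow 3 (-k) t) b := by
    have := τpow_pref (-k) h2
    rwa [τpow_add, neg_add_cancel, τpow_zero] at this
  have ht3 : Pref 3 (τpow 3 (-k) t) (dcompl 3 a) := by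
    have := τpow_pref (-k) h3
    rwa [τpow_dcompl, τpow_add, neg_add_cancel, τpow_zero] at this
  have := h _ ht1 ht2 ht3
  have h4 := congrArg (τpow 3 k) this
  rwa [τpow_add, add_neg_cancel, τpow_zero, τpow_one_elem] at h4

lemma τpow_prod (k : ℤ) (L : List (B 3)) :
    τpow 3 k L.prod = (L.map (τpow 3 k)).prod := by
  induction L with
  | nil => simpa using τpow_one_elem k
  | cons a t ih => rw [List.prod_cons, τpow_mul, ih, List.map_cons, List.prod_cons]

lemma getD_map_τpow (k : ℤ) (L : List (B 3)) (i : ℕ) :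
    (L.map (τpow 3 k)).getD i 1 = τpow 3 k (L.getD i 1) := by
  induction L generalizing i with
  | nil => simp [τpow_one_elem]
  | cons a t ih =>
      cases i with
      | zero => simp
      | succ n => simpa using ih n

lemma isLNF_τpow (k : ℤ) {x : B 3} {p : ℤ} {L : List (B 3)} (h : IsLNF 3 x p L) :
    IsLNF 3 (τpow 3 k x) p (L.map (τpow 3 k)) := by
  obtain ⟨hx, hfac, hlw⟩ := h
  refine ⟨?_, ?_, ?_⟩
  · rw [hx, ← τpow_prod]
    simp only [τpow_def]
    group
  · rintro s hs
    rw [List.mem_map] at hs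
    obtain ⟨a, ha, rfl⟩ := hs
    obtain ⟨q1, q2, q3⟩ := hfac a ha
    exact ⟨τpow_simple k q1, τpow_ne_one k q2, τpow_ne_delta k q3⟩
  · intro i hi
    rw [List.length_map] at hi
    rw [getD_map_τpow, getD_map_τpow]
    exact τpow_lw k (hlw i hi)
/-! ### Cycling of rigid braids -/

lemma cyc_eval {y : B 3} {p : ℤ} {M : List (B 3)} (h : IsLNF 3 y p M) (hne : M ≠ []) :
    cyc 3 y = (τpow 3 (-p) (M.headD 1))⁻¹ * y * τpow 3 (-p) (M.headD 1) := by
  have hex : ∃ pL : ℤ × List (B 3), IsLNF 3 y pL.1 pL.2 ∧ pL.2 ≠ [] :=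
    ⟨(p, M), h, hne⟩
  unfold cyc
  rw [dif_pos hex]
  obtain ⟨h1, _⟩ := Classical.choose_spec hex
  obtain ⟨hp, hM⟩ := lnf_unique h1 h
  rw [hp, hM]

/-- conjugating a left normal form by `τ^{-p}` of its first factor rotates it -/
lemma conj_head {y : B 3} {p : ℤ} {M : List (B 3)} (h : IsLNF 3 y p M) (hne : M ≠ []) :
    (τpow 3 (-p) (M.headD 1))⁻¹ * y * τpow 3 (-p) (M.headD 1) =
      Δb 3 ^ p * (M.tail ++ [τpow 3 (-p) (M.headD 1)]).prod := by
  obtain ⟨m, t, rfl⟩ : ∃ m t, M = m :: t := by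
    cases M with
    | nil => exact absurd rfl hne
    | cons m t => exact ⟨m, t, rfl⟩
  obtain ⟨hx, -, -⟩ := h
  rw [hx]
  simp only [List.headD_cons, List.tail_cons, List.prod_cons, List.prod_append,
    List.prod_cons, List.prod_nil, τpow_def, neg_neg]
  group

/-- `Good p y M`: `Δ^p M` is the left normal form of `y`, it is nonempty and rigid. -/
def Good (p : ℤ) (y : B 3) (M : List (B 3)) : Prop :=
  IsLNF 3 y p M ∧ M ≠ [] ∧
    LeftWeighted 3 (M.getLastD 1) (τpow 3 (-p) (M.headD 1))

lemma getD_append_left {α : Type} [Inhabited α] (l l' : List α) (i : ℕ) (hi : i < l.length)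
    (dflt : α) : (l ++ l').getD i dflt = l.getD i dflt := by
  rw [List.getD_eq_getElem?_getD, List.getD_eq_getElem?_getD,
    List.getElem?_append_left hi]

lemma cyc_step {y : B 3} {p : ℤ} {M : List (B 3)} (hG : Good p y M) :
    cyc 3 y = Δb 3 ^ p * (M.tail ++ [τpow 3 (-p) (M.headD 1)]).prod ∧
      Good p (cyc 3 y) (M.tail ++ [τpow 3 (-p) (M.headD 1)]) := by
  obtain ⟨hLNF, hne, hrig⟩ := hG
  have hval : cyc 3 y = Δb 3 ^ p * (M.tail ++ [τpow 3 (-p) (M.headD 1)]).prod := by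
    rw [cyc_eval hLNF hne]
    exact conj_head hLNF hne
  refine ⟨hval, ?_, by simp, ?_⟩
  · -- IsLNF of the rotated list
    obtain ⟨m, t, rfl⟩ : ∃ m t, M = m :: t := by
      cases M with
      | nil => exact absurd rfl hne
      | cons m t => exact ⟨m, t, rfl⟩
    obtain ⟨hx, hfac, hlw⟩ := hLNF
    simp only [List.headD_cons, List.tail_cons] at hval ⊢
    refine ⟨hval, ?_, ?_⟩
    · intro s hs
      rw [List.mem_append] at hs
      rcases hs with hs | hs
      · exact hfac s (List.mem_cons_of_mem _ hs)
      · rw [List.mem_singleton] at hs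
        subst hs
        obtain ⟨q1, q2, q3⟩ := hfac m (List.mem_cons_self)
        exact ⟨τpow_simple _ q1, τpow_ne_one _ q2, τpow_ne_delta _ q3⟩
    · intro i hi
      rw [List.length_append, List.length_singleton] at hi
      by_cases hcase : i + 1 < t.length
      · rw [getD_append_left t _ i (by omega), getD_append_left t _ (i+1) hcase]
        have := hlw (i+1) (by simpa using Nat.succ_lt_succ hcase)
        simpa using this
      · -- i + 1 = t.length, second entry is the new last factor
        have hieq : i + 1 = t.length := by omega
        have h2 : (t ++ [τpow 3 (-p) m]).getD (i+1) 1 = τpow 3 (-p) m := by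
          rw [List.getD_eq_getElem?_getD, hieq, List.getElem?_append_right (le_refl _)]
          simp
        have h1 : (t ++ [τpow 3 (-p) m]).getD i 1 = t.getD i 1 := by
          exact getD_append_left t _ i (by omega) 1
        rw [h1, h2]
        -- t.getD i 1 is the last entry of M = m :: t
        have hlast : t.getD i 1 = (m :: t).getLastD 1 := by
          rw [List.getLastD_eq_getLast?, List.getLast?_eq_getElem?,
              List.getD_eq_getElem?_getD]
          have hlen : (m :: t).length - 1 = i + 1 := by
            simp only [List.length_cons]; omega
          rw [hlen, List.getElem?_cons_succ]
        rw [hlast]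
        have hhead : (m :: t).headD 1 = m := rfl
        rw [← hhead]
        exact hrig
  · -- rigidity of the rotated list
    obtain ⟨m, t, rfl⟩ : ∃ m t, M = m :: t := by
      cases M with
      | nil => exact absurd rfl hne
      | cons m t => exact ⟨m, t, rfl⟩
    obtain ⟨hx, hfac, hlw⟩ := hLNF
    simp only [List.headD_cons, List.tail_cons]
    cases t with
    | nil =>
        simpa using τpow_lw (-p) (by simpa using hrig)
    | cons b t' =>
        have hlast : ((b :: t') ++ [τpow 3 (-p) m]).getLastD 1 = τpow 3 (-p) m :=
          List.getLastD_concat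
        have hhead : ((b :: t') ++ [τpow 3 (-p) m]).headD 1 = b := rfl
        rw [hlast, hhead]
        exact τpow_lw (-p) (by simpa using hlw 0 (by simp))
lemma iterate_good {p : ℤ} {W : List (B 3)} {y0 : B 3} (hG : Good p y0 W) :
    ∀ k : ℕ, k < W.length →
      Good p ((cyc 3)^[k] y0) (W.drop k ++ (W.take k).map (τpow 3 (-p))) := by
  intro k
  induction k with
  | zero => intro _; simpa using hG
  | succ k ih =>
      intro hk1
      have hk : k < W.length := by omega
      have ihk := ih hk
      have hstep := cyc_step ihk
      rw [Function.iterate_succ_apply']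
      have hdrop : W.drop k = W[k] :: W.drop (k+1) := by
        rw [List.drop_eq_getElem_cons hk]
      have hhead : (W.drop k ++ (W.take k).map (τpow 3 (-p))).headD 1 = W[k] := by
        rw [hdrop]; rfl
      have htail : (W.drop k ++ (W.take k).map (τpow 3 (-p))).tail =
          W.drop (k+1) ++ (W.take k).map (τpow 3 (-p)) := by
        rw [hdrop]; rfl
      have hlist : (W.drop k ++ (W.take k).map (τpow 3 (-p))).tail ++
          [τpow 3 (-p) ((W.drop k ++ (W.take k).map (τpow 3 (-p))).headD 1)] =
          W.drop (k+1) ++ (W.take (k+1)).map (τpow 3 (-p)) := by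
        rw [htail, hhead, List.take_succ]
        have : W[k]?.toList = [W[k]] := by
          rw [List.getElem?_eq_getElem hk]; rfl
        rw [this, List.map_append, List.append_assoc]
        rfl
      rw [← hlist]
      exact hstep.2

lemma getLastD_map_τpow (k : ℤ) (L : List (B 3)) :
    (L.map (τpow 3 k)).getLastD 1 = τpow 3 k (L.getLastD 1) := by
  rw [← τpow_one_elem k, List.getLastD_map]
  rw [τpow_one_elem]

lemma headD_map_τpow (k : ℤ) (L : List (B 3)) :
    (L.map (τpow 3 k)).headD 1 = τpow 3 k (L.headD 1) := by
  cases L with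
  | nil => simp [τpow_one_elem]
  | cons a t => rfl

theorem conj_by_complement_of_rigid_B3' (z : B 3) (p : ℤ) (L : List (B 3))
    (hLNF : IsLNF 3 z p L) (hne : L ≠ [])
    (hrigid : LeftWeighted 3 (L.getLastD 1) (τpow 3 (-p) (L.headD 1))) :
    (dcompl 3 (L.getLastD 1))⁻¹ * z * dcompl 3 (L.getLastD 1) =
      (Δb 3) ^ p * τpow 3 (p + 1) (L.getLastD 1) *
        ((L.dropLast).map (τpow 3 1)).prod ∧
    (dcompl 3 (L.getLastD 1))⁻¹ * z * dcompl 3 (L.getLastD 1) =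
      (cyc 3)^[L.length - 1] (τpow 3 (p + 1) z) := by
  have hxz := hLNF.1
  have hLsplit : L.dropLast ++ [L.getLast hne] = L := List.dropLast_append_getLast hne
  have hgD : L.getLastD 1 = L.getLast hne := by
    rw [List.getLastD_eq_getLast?, List.getLast?_eq_getLast hne]
    rfl
  have hprod : L.prod = L.dropLast.prod * L.getLastD 1 := by
    rw [hgD]
    conv_lhs => rw [← hLsplit]
    rw [List.prod_append, List.prod_cons, List.prod_nil, mul_one]
  -- Part 1 : pure group computation
  have part1 : (dcompl 3 (L.getLastD 1))⁻¹ * z * dcompl 3 (L.getLastD 1) =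
      (Δb 3) ^ p * τpow 3 (p + 1) (L.getLastD 1) *
        ((L.dropLast).map (τpow 3 1)).prod := by
    rw [← τpow_prod, hxz, hprod]
    show (dcompl 3 (L.getLastD 1))⁻¹ * (Δb 3 ^ p * (L.dropLast.prod * L.getLastD 1)) *
        dcompl 3 (L.getLastD 1) = _
    simp only [dcompl, τpow_def]
    group
  refine ⟨part1, ?_⟩
  -- Part 2 : relation with cycling
  set W : List (B 3) := L.map (τpow 3 (p+1)) with hW
  have hWlen : W.length = L.length := by simp [hW]
  have hWne : W ≠ [] := by
    simp only [hW, ne_eq, List.map_eq_nil_iff]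
    exact hne
  have hG : Good p (τpow 3 (p+1) z) W := by
    refine ⟨isLNF_τpow (p+1) hLNF, hWne, ?_⟩
    rw [hW, getLastD_map_τpow, headD_map_τpow]
    have h1 := τpow_lw (p+1) hrigid
    have he : τpow 3 (p+1) (τpow 3 (-p) (L.headD 1)) =
        τpow 3 (-p) (τpow 3 (p+1) (L.headD 1)) := by
      rw [τpow_add, τpow_add]
      have : (p + 1) + -p = -p + (p + 1) := by ring
      rw [this]
    rw [he] at h1
    exact h1
  have hlen1 : L.length - 1 < W.length := by
    rw [hWlen]
    have : 0 < L.length := List.length_pos_iff.mpr hne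
    omega
  have hiter := iterate_good hG (L.length - 1) hlen1
  have hval := hiter.1.1
  -- identify the final list
  have hidx : L.length - 1 < W.length := hlen1
  have hdropW : W.drop (L.length - 1) = [W[L.length - 1]] := by
    rw [List.drop_eq_getElem_cons hidx]
    have : W.drop (L.length - 1 + 1) = [] := by
      apply List.drop_eq_nil_of_le
      rw [hWlen]
      omega
    rw [this]
  have htakeW : W.take (L.length - 1) = W.dropLast := by
    rw [List.dropLast_eq_take]
    congr 1
    rw [hWlen]
  have hlastW : W[L.length - 1] = τpow 3 (p+1) (L.getLastD 1) := by
    have h1 : W.getLastD 1 = W[L.length - 1] := by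
      rw [List.getLastD_eq_getLast?, List.getLast?_eq_getElem?]
      have : W.length - 1 = L.length - 1 := by rw [hWlen]
      rw [this, List.getElem?_eq_getElem hidx]
      rfl
    rw [← h1, hW, getLastD_map_τpow]
  have hdlW : W.dropLast = L.dropLast.map (τpow 3 (p+1)) := by
    rw [hW, ← List.map_dropLast]
  have hmapmap : (L.dropLast.map (τpow 3 (p+1))).map (τpow 3 (-p)) =
      L.dropLast.map (τpow 3 1) := by
    rw [List.map_map]
    apply List.map_congr_left
    intro a _
    show τpow 3 (-p) (τpow 3 (p+1) a) = τpow 3 1 a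
    rw [τpow_add]
    have : -p + (p + 1) = 1 := by ring
    rw [this]
  rw [hdropW, htakeW, hdlW, hmapmap, hlastW] at hval
  rw [hval, part1]
  rw [List.singleton_append, List.prod_cons]
  group

/-- Let `z = Δ^p z_1 ⋯ z_ℓ` be a rigid 3-braid in left normal form
with `ℓ ≥ 1`. Then
`∂(z_ℓ)⁻¹ z ∂(z_ℓ) = Δ^p τ^{p+1}(z_ℓ) τ(z_1) ⋯ τ(z_{ℓ-1}) = c^{ℓ-1}(τ^{p+1}(z))`. -/
theorem conj_by_complement_of_rigid_B3 (z : B 3) (p : ℤ) (L : List (B 3))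
    (hLNF : IsLNF 3 z p L) (hne : L ≠ [])
    (hrigid : LeftWeighted 3 (L.getLastD 1) (τpow 3 (-p) (L.headD 1))) :
    (dcompl 3 (L.getLastD 1))⁻¹ * z * dcompl 3 (L.getLastD 1) =
      (Δb 3) ^ p * τpow 3 (p + 1) (L.getLastD 1) *
        ((L.dropLast).map (τpow 3 1)).prod ∧
    (dcompl 3 (L.getLastD 1))⁻¹ * z * dcompl 3 (L.getLastD 1) =
      (cyc 3)^[L.length - 1] (τpow 3 (p + 1) z) := by
  exact conj_by_complement_of_rigid_B3' z p L hLNF hne hrigid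

end Braid
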